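/- Let U ⊆ ℝ² be a nonempty open connected set, let γ̃ : U → M₂(ℝ) be a C¹ map whose values are invertible symmetric matrices, and let β, β' : U → ℝ be positive C¹ functions. Let u₁, u₂, u'₁, u'₂ be real-valued C² functions on U such that β γ̃ ∇u_i = β' γ̃ ∇u'_i =: H_i on U for i = 1, 2, and suppose det([H₁(x), H₂(x)]) ≠ 0 for every x ∈ U. If β(x₀) = β'(x₀) for some x₀ ∈ U, then β = β' on U. -/

import Mathlib

/-! Since `γ̃` is invertible, `∇vᵢ = r ∇uᵢ` with `r = β / β'`. Symmetry of the Hessians of `uᵢ`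
and `vᵢ` then forces `∇r` to be parallel to `∇uᵢ`. As `det(H₁, H₂) = β² det γ̃ det(∇u₁, ∇u₂)`, the
gradients `∇u₁, ∇u₂` are independent, so `∇r = 0` and `r` is constant on the connected set `U`,
equal to `r x₀ = 1`. -/

open Matrix Topology

/-- The gradient of a real-valued function on ℝ², as a vector of partial derivatives. -/
noncomputable def grad (u : (Fin 2 → ℝ) → ℝ) (x : Fin 2 → ℝ) : Fin 2 → ℝ :=
  fun i => fderiv ℝ u x (Pi.single i 1)

/-- The 2×2 matrix with columns `a` and `b`. -/
def col2 (a b : Fin 2 → ℝ) : Matrix (Fin 2) (Fin 2) ℝ :=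
  Matrix.of fun i => ![a i, b i]

lemma eq_div_smul_of_smul_mulVec_eq {K n : Type*} [Field K] [Fintype n] [DecidableEq n]
    {A : Matrix n n K} (hA : IsUnit A.det) {c c' : K} (hc' : c' ≠ 0) {a b : n → K}
    (h : (c • A) *ᵥ a = (c' • A) *ᵥ b) : b = (c / c') • a := by
  rw [smul_mulVec, smul_mulVec, ← mulVec_smul, ← mulVec_smul] at h
  have hab : c • a = c' • b := mulVec_injective_of_isUnit ((isUnit_iff_isUnit_det A).2 hA) h
  rw [div_eq_inv_mul, mul_smul, hab, inv_smul_smul₀ hc']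

lemma col2_mulVec (A : Matrix (Fin 2) (Fin 2) ℝ) (a b : Fin 2 → ℝ) :
    col2 (A *ᵥ a) (A *ᵥ b) = A * col2 a b := by
  ext i j
  fin_cases j <;> simp [col2, mulVec, dotProduct, Matrix.mul_apply]

lemma det_col2 (a b : Fin 2 → ℝ) : (col2 a b).det = a 0 * b 1 - b 0 * a 1 := by
  simp [col2, det_fin_two]

lemma eq_zero_of_det_col2_eq_zero {a b c : Fin 2 → ℝ} (hab : (col2 a b).det ≠ 0)
    (hac : (col2 a c).det = 0) (hbc : (col2 b c).det = 0) : c = 0 := by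
  rw [det_col2] at hab hac hbc
  have h0 : c 0 * (a 0 * b 1 - b 0 * a 1) = 0 := by linear_combination b 0 * hac - a 0 * hbc
  have h1 : c 1 * (a 0 * b 1 - b 0 * a 1) = 0 := by linear_combination b 1 * hac - a 1 * hbc
  ext i
  fin_cases i
  exacts [(mul_eq_zero.1 h0).resolve_right hab, (mul_eq_zero.1 h1).resolve_right hab]

lemma fderiv_eq_zero_of_grad_eq_zero {u : (Fin 2 → ℝ) → ℝ} {x : Fin 2 → ℝ}
    (h : grad u x = 0) : fderiv ℝ u x = 0 := by
  refine ContinuousLinearMap.coe_injective (LinearMap.pi_ext fun i t => ?_)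
  have hi : fderiv ℝ u x (Pi.single i 1) = 0 := congrFun h i
  rw [show (Pi.single i t : Fin 2 → ℝ) = t • Pi.single i 1 by
    rw [← Pi.single_smul, smul_eq_mul, mul_one]]
  simp [hi]

lemma contDiffAt_grad {u : (Fin 2 → ℝ) → ℝ} {x : Fin 2 → ℝ} (h : ContDiffAt ℝ 2 u x)
    (i : Fin 2) : ContDiffAt ℝ 1 (fun y => grad u y i) x :=
  (ContinuousLinearMap.apply ℝ ℝ (Pi.single i 1)).contDiff.contDiffAt.comp x
    (h.fderiv_right (by norm_num))

lemma fderiv_grad_apply_comm {u : (Fin 2 → ℝ) → ℝ} {x : Fin 2 → ℝ} (h : ContDiffAt ℝ 2 u x)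
    (i j : Fin 2) :
    fderiv ℝ (fun y => grad u y i) x (Pi.single j 1)
      = fderiv ℝ (fun y => grad u y j) x (Pi.single i 1) := by
  have hd : DifferentiableAt ℝ (fderiv ℝ u) x :=
    (h.fderiv_right (m := 1) (by norm_num)).differentiableAt one_ne_zero
  have hpartial : ∀ k w, fderiv ℝ (fun y => grad u y k) x w
      = fderiv ℝ (fderiv ℝ u) x w (Pi.single k 1) := fun k w => by
    change fderiv ℝ ((ContinuousLinearMap.apply ℝ ℝ (Pi.single k 1)) ∘ fderiv ℝ u) x w = _
    rw [((ContinuousLinearMap.apply ℝ ℝ _).hasFDerivAt.comp x hd.hasFDerivAt).fderiv]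
    rfl
  rw [hpartial, hpartial, h.isSymmSndFDerivAt (by simp)]

lemma det_col2_grad_eq_zero_of_grad_eq_smul {u v r : (Fin 2 → ℝ) → ℝ} {x : Fin 2 → ℝ}
    (hu : ContDiffAt ℝ 2 u x) (hv : ContDiffAt ℝ 2 v x) (hr : DifferentiableAt ℝ r x)
    (hvu : ∀ᶠ y in 𝓝 x, grad v y = r y • grad u y) :
    (col2 (grad u x) (grad r x)).det = 0 := by
  have product_rule : ∀ k, fderiv ℝ (fun y => grad v y k) x
      = r x • fderiv ℝ (fun y => grad u y k) x + grad u x k • fderiv ℝ r x := fun k => by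
    have hk : (fun y => grad v y k) =ᶠ[𝓝 x] fun y => r y * grad u y k := by
      filter_upwards [hvu] with y hy
      rw [hy, Pi.smul_apply, smul_eq_mul]
    rw [hk.fderiv_eq, fderiv_fun_mul hr ((contDiffAt_grad hu k).differentiableAt one_ne_zero)]
  -- In `∂₁∂₀v = ∂₀∂₁v` the terms `r ∂∂u` cancel by symmetry for `u`, leaving the claim.
  have hv01 := fderiv_grad_apply_comm hv 0 1
  rw [product_rule, product_rule] at hv01
  simp only [_root_.add_apply, _root_.smul_apply, smul_eq_mul,
    fderiv_grad_apply_comm hu 0 1] at hv01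
  rw [det_col2]
  simp only [grad] at hv01 ⊢
  linarith

lemma fderiv_eq_zero_of_grad_eq_smul {u₁ u₂ v₁ v₂ r : (Fin 2 → ℝ) → ℝ} {x : Fin 2 → ℝ}
    (hu₁ : ContDiffAt ℝ 2 u₁ x) (hu₂ : ContDiffAt ℝ 2 u₂ x)
    (hv₁ : ContDiffAt ℝ 2 v₁ x) (hv₂ : ContDiffAt ℝ 2 v₂ x) (hr : DifferentiableAt ℝ r x)
    (hvu₁ : ∀ᶠ y in 𝓝 x, grad v₁ y = r y • grad u₁ y)
    (hvu₂ : ∀ᶠ y in 𝓝 x, grad v₂ y = r y • grad u₂ y)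
    (hdet : (col2 (grad u₁ x) (grad u₂ x)).det ≠ 0) :
    fderiv ℝ r x = 0 :=
  fderiv_eq_zero_of_grad_eq_zero <| eq_zero_of_det_col2_eq_zero hdet
    (det_col2_grad_eq_zero_of_grad_eq_smul hu₁ hv₁ hr hvu₁)
    (det_col2_grad_eq_zero_of_grad_eq_smul hu₂ hv₂ hr hvu₂)

theorem stmt1_general (U : Set (Fin 2 → ℝ)) (hUopen : IsOpen U) (hUconn : IsConnected U)
    (γt : (Fin 2 → ℝ) → Matrix (Fin 2) (Fin 2) ℝ)
    (hγtinv : ∀ x ∈ U, IsUnit (γt x).det)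
    (β β' : (Fin 2 → ℝ) → ℝ)
    (hβC : ContDiffOn ℝ 1 β U) (hβ'C : ContDiffOn ℝ 1 β' U)
    (hβ'pos : ∀ x ∈ U, 0 < β' x)
    (u₁ u₂ v₁ v₂ : (Fin 2 → ℝ) → ℝ)
    (hu₁ : ContDiffOn ℝ 2 u₁ U) (hu₂ : ContDiffOn ℝ 2 u₂ U)
    (hv₁ : ContDiffOn ℝ 2 v₁ U) (hv₂ : ContDiffOn ℝ 2 v₂ U)
    (H₁ H₂ : (Fin 2 → ℝ) → Fin 2 → ℝ)
    (hH₁ : ∀ x ∈ U, H₁ x = (β x • γt x).mulVec (grad u₁ x))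
    (hH₂ : ∀ x ∈ U, H₂ x = (β x • γt x).mulVec (grad u₂ x))
    (hH₁' : ∀ x ∈ U, H₁ x = (β' x • γt x).mulVec (grad v₁ x))
    (hH₂' : ∀ x ∈ U, H₂ x = (β' x • γt x).mulVec (grad v₂ x))
    (hdet : ∀ x ∈ U, (col2 (H₁ x) (H₂ x)).det ≠ 0)
    (x₀ : Fin 2 → ℝ) (hx₀ : x₀ ∈ U) (hβx₀ : β x₀ = β' x₀) :
    ∀ x ∈ U, β x = β' x := by
  have hβ' : ∀ x ∈ U, β' x ≠ 0 := fun x hx => (hβ'pos x hx).ne'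
  set r : (Fin 2 → ℝ) → ℝ := fun x => β x / β' x
  have hr : DifferentiableOn ℝ r U := by
    simpa only [r, div_eq_mul_inv] using
      (hβC.differentiableOn one_ne_zero).fun_mul ((hβ'C.differentiableOn one_ne_zero).fun_inv hβ')
  have hvu : ∀ {u v : (Fin 2 → ℝ) → ℝ} {H : (Fin 2 → ℝ) → Fin 2 → ℝ},
      (∀ x ∈ U, H x = (β x • γt x) *ᵥ grad u x) → (∀ x ∈ U, H x = (β' x • γt x) *ᵥ grad v x) →
      ∀ x ∈ U, grad v x = r x • grad u x := fun hH hH' x hx =>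
    eq_div_smul_of_smul_mulVec_eq (hγtinv x hx) (hβ' x hx) ((hH x hx).symm.trans (hH' x hx))
  have hdet_grad : ∀ x ∈ U, (col2 (grad u₁ x) (grad u₂ x)).det ≠ 0 := fun x hx => by
    have h := hdet x hx
    rw [hH₁ x hx, hH₂ x hx, col2_mulVec, det_mul] at h
    exact right_ne_zero_of_mul h
  have hr' : Set.EqOn (fderiv ℝ r) 0 U := fun x hx => by
    have hU := hUopen.mem_nhds hx
    exact fderiv_eq_zero_of_grad_eq_smul (hu₁.contDiffAt hU) (hu₂.contDiffAt hU)
      (hv₁.contDiffAt hU) (hv₂.contDiffAt hU) (hr.differentiableAt hU)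
      (Filter.eventually_of_mem hU (hvu hH₁ hH₁')) (Filter.eventually_of_mem hU (hvu hH₂ hH₂'))
      (hdet_grad x hx)
  intro x hx
  have hrx : r x = r x₀ := hUopen.is_const_of_fderiv_eq_zero hUconn.isPreconnected hr hr' hx hx₀
  have hrx₀ : r x₀ = 1 := by simp only [r, hβx₀, div_self (hβ' x₀ hx₀)]
  exact (div_eq_one_iff_eq (hβ' x hx)).1 (hrx.trans hrx₀)

/-- Uniqueness of the isotropic part `β` of the conductivity `γ = βγ̃` with known anisotropy:
two current-density measurements `H₁, H₂` with `det(H₁,H₂) ≠ 0` determine `β` on a connected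
open set up to its value at one point. -/
theorem stmt1 (U : Set (Fin 2 → ℝ)) (hUopen : IsOpen U) (hUconn : IsConnected U)
    (γt : (Fin 2 → ℝ) → Matrix (Fin 2) (Fin 2) ℝ)
    (hγtC : ∀ i j, ContDiffOn ℝ 1 (fun x => γt x i j) U)
    (hγtsymm : ∀ x ∈ U, (γt x).IsSymm) (hγtinv : ∀ x ∈ U, IsUnit (γt x).det)
    (β β' : (Fin 2 → ℝ) → ℝ)
    (hβC : ContDiffOn ℝ 1 β U) (hβ'C : ContDiffOn ℝ 1 β' U)
    (hβpos : ∀ x ∈ U, 0 < β x) (hβ'pos : ∀ x ∈ U, 0 < β' x)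
    (u₁ u₂ v₁ v₂ : (Fin 2 → ℝ) → ℝ)
    (hu₁ : ContDiffOn ℝ 2 u₁ U) (hu₂ : ContDiffOn ℝ 2 u₂ U)
    (hv₁ : ContDiffOn ℝ 2 v₁ U) (hv₂ : ContDiffOn ℝ 2 v₂ U)
    (H₁ H₂ : (Fin 2 → ℝ) → Fin 2 → ℝ)
    (hH₁ : ∀ x ∈ U, H₁ x = (β x • γt x).mulVec (grad u₁ x))
    (hH₂ : ∀ x ∈ U, H₂ x = (β x • γt x).mulVec (grad u₂ x))
    (hH₁' : ∀ x ∈ U, H₁ x = (β' x • γt x).mulVec (grad v₁ x))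
    (hH₂' : ∀ x ∈ U, H₂ x = (β' x • γt x).mulVec (grad v₂ x))
    (hdet : ∀ x ∈ U, (col2 (H₁ x) (H₂ x)).det ≠ 0)
    (x₀ : Fin 2 → ℝ) (hx₀ : x₀ ∈ U) (hβx₀ : β x₀ = β' x₀) :
    ∀ x ∈ U, β x = β' x :=
  stmt1_general U hUopen hUconn γt hγtinv β β' hβC hβ'C hβ'pos u₁ u₂ v₁ v₂ hu₁ hu₂ hv₁ hv₂ H₁ H₂ hH₁
    hH₂ hH₁' hH₂' hdet x₀ hx₀ hβx₀
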